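/- Let k ≥ 2 and let G be a graph containing no copy of M̄_k⁺ (the complete graph on 2k vertices minus a perfect matching, plus one matching edge restored). Then any two vertex-disjoint copies of K_k in G span at most one copy of M̄_k. -/

import Mathlib

open SimpleGraph

/-- Number of (unlabeled) subgraph copies of `H` in `G`. -/
noncomputable def copyCount {α β : Type*} [Fintype β] (H : SimpleGraph α) (G : SimpleGraph β) : ℕ :=
  {G' : G.Subgraph | Nonempty (G'.coe ≃g H)}.ncard

/-- The graph `M̄_k`: the complete graph on `2k` vertices minus a perfect matching, realized
on `Fin k × Fin 2` where two vertices are adjacent iff they differ in the first coordinate. -/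
def matchingComplement (k : ℕ) : SimpleGraph (Fin k × Fin 2) :=
  SimpleGraph.comap Prod.fst ⊤

/-- The graph `M̄_k⁺`: `K_{2k}` minus all but one edge of a perfect matching, i.e. `M̄_k`
with one matching edge restored. -/
def matchingComplementPlus (k : ℕ) [NeZero k] : SimpleGraph (Fin k × Fin 2) :=
  matchingComplement k ⊔ SimpleGraph.fromEdgeSet {s(((0 : Fin k), (0 : Fin 2)), (0, 1))}

/-!
Two distinct vertices of `M̄_k` are non-adjacent exactly when they form a matching pair, and the
automorphisms of `M̄_k` act transitively on matching pairs; so an edge of `G` joining two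
non-adjacent vertices of a copy of `M̄_k` completes a copy of `M̄_k⁺`. In an `M̄_k⁺`-free graph
every copy of `M̄_k` is therefore an induced subgraph, hence determined by its vertex set.
-/

theorem copyCount_eq_zero_iff_free {α β : Type*} [Fintype β] {A : SimpleGraph α}
    {B : SimpleGraph β} : _root_.copyCount A B = 0 ↔ A.Free B := by
  rw [_root_.copyCount, Set.ncard_eq_zero (Set.toFinite _), Free,
    isContained_iff_exists_iso_subgraph, Set.eq_empty_iff_forall_notMem, not_exists]
  exact forall_congr' fun _ => not_congr ⟨fun ⟨e⟩ => ⟨e.symm⟩, fun ⟨e⟩ => ⟨e.symm⟩⟩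

theorem SimpleGraph.Copy.isContained_sup_edge {α β : Type*} {A : SimpleGraph α}
    {B : SimpleGraph β} (f : Copy A B) {u v : α} (huv : B.Adj (f u) (f v)) :
    A ⊔ edge u v ⊑ B := by
  refine ⟨⟨⟨f, fun {x y} hxy => ?_⟩, f.injective⟩⟩
  rcases hxy with hxy | hxy
  · exact f.toHom.map_adj hxy
  · obtain ⟨⟨rfl, rfl⟩ | ⟨rfl, rfl⟩, -⟩ := (edge_adj u v x y).mp hxy
    exacts [huv, huv.symm]

theorem matchingComplement_adj {k : ℕ} {p q : Fin k × Fin 2} :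
    (matchingComplement k).Adj p q ↔ p.1 ≠ q.1 := by
  simp [matchingComplement]

theorem matchingComplementPlus_eq (k : ℕ) [NeZero k] :
    matchingComplementPlus k = matchingComplement k ⊔ edge (0, 0) (0, 1) := rfl

theorem matchingComplement_exists_iso_apply_eq {k : ℕ} [NeZero k] (a : Fin k) {i j : Fin 2}
    (hij : i ≠ j) :
    ∃ σ : matchingComplement k ≃g matchingComplement k, σ (0, 0) = (a, i) ∧ σ (0, 1) = (a, j) := by
  have hj : Equiv.swap 0 i 1 = j := by decide +revert
  refine ⟨⟨Equiv.prodCongr (Equiv.swap 0 a) (Equiv.swap 0 i), ?_⟩, ?_, ?_⟩ <;>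
    simp [matchingComplement_adj, hj]

theorem matchingComplementPlus_isContained_of_adj {β : Type*} {G : SimpleGraph β} {k : ℕ}
    [NeZero k] (f : Copy (matchingComplement k) G) {p q : Fin k × Fin 2} (hpq : p ≠ q)
    (hnadj : ¬(matchingComplement k).Adj p q) (hadj : G.Adj (f p) (f q)) :
    matchingComplementPlus k ⊑ G := by
  obtain ⟨a, i⟩ := p
  obtain ⟨b, j⟩ := q
  obtain rfl : a = b := by simpa [matchingComplement_adj] using hnadj
  obtain ⟨σ, hσ₀, hσ₁⟩ := matchingComplement_exists_iso_apply_eq a (by simpa using hpq)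
  rw [matchingComplementPlus_eq]
  exact (f.comp σ.toCopy).isContained_sup_edge (by simpa [hσ₀, hσ₁] using hadj)

theorem SimpleGraph.Subgraph.isInduced_of_iso_matchingComplement {β : Type*} {G : SimpleGraph β}
    {k : ℕ} [NeZero k] (hfree : (matchingComplementPlus k).Free G) {G' : G.Subgraph}
    (e : G'.coe ≃g matchingComplement k) : G'.IsInduced := by
  intro a ha b hb hab
  by_contra hnadj
  refine hfree (matchingComplementPlus_isContained_of_adj (G'.coeCopy.comp e.symm.toCopy)
    (p := e ⟨a, ha⟩) (q := e ⟨b, hb⟩) ?_ ?_ ?_)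
  · simpa using hab.ne
  · rwa [e.map_adj_iff, Subgraph.coe_adj]
  · simpa [Subgraph.coeCopy] using hab

theorem matchingComplementPlus_free_span_at_most_one_general {β : Type*} [Fintype β] [DecidableEq β]
    (G : SimpleGraph β) (k : ℕ) [NeZero k]
    (hfree : _root_.copyCount (matchingComplementPlus k) G = 0) (S T : Finset β) :
    {G' : G.Subgraph | G'.verts = ↑(S ∪ T) ∧
      Nonempty (G'.coe ≃g matchingComplement k)}.ncard ≤ 1 := by
  rw [Set.ncard_le_one (Set.toFinite _)]
  rintro G₁ ⟨hv₁, ⟨e₁⟩⟩ G₂ ⟨hv₂, ⟨e₂⟩⟩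
  rw [copyCount_eq_zero_iff_free] at hfree
  rw [← (Subgraph.isInduced_of_iso_matchingComplement hfree e₁).induce_top_verts,
    ← (Subgraph.isInduced_of_iso_matchingComplement hfree e₂).induce_top_verts, hv₁, hv₂]

/-- In a graph `G` containing no copy of `M̄_k⁺`, any two vertex-disjoint copies of `K_k`
span at most one copy of `M̄_k`. -/
theorem matchingComplementPlus_free_span_at_most_one {β : Type*} [Fintype β] [DecidableEq β]
    (G : SimpleGraph β) (k : ℕ) (hk : 2 ≤ k) [NeZero k]
    (hfree : _root_.copyCount (matchingComplementPlus k) G = 0) (S T : Finset β)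
    (hS : G.IsNClique k S) (hT : G.IsNClique k T) (hdisj : Disjoint S T) :
    {G' : G.Subgraph | G'.verts = ↑(S ∪ T) ∧
      Nonempty (G'.coe ≃g matchingComplement k)}.ncard ≤ 1 :=
  matchingComplementPlus_free_span_at_most_one_general G k hfree S T
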